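/- arXiv:1709.09889 — 4 statements merged into one kernel-verified Lean document; each statement's English description precedes it below -/
import Mathlib

section
/- Let G be a finite interval graph, i.e., a finite simple graph whose vertices v can be assigned closed real intervals [a_v, b_v] (with a_v ≤ b_v) such that two distinct vertices u, v are adjacent if and only if [a_u, b_u] ∩ [a_v, b_v] ≠ ∅. Then for every weight function w : V(G) → ℕ, γ_w(G) = ρ_w(G). -/
open Finset

variable {V : Type*}

/-- The closed neighborhood of a vertex `v`: `{v}` together with its neighbors. -/
def closedNbr [Fintype V] [DecidableEq V] (G : SimpleGraph V) [DecidableRel G.Adj]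
    (v : V) : Finset V :=
  insert v (G.neighborFinset v)

/-- `f` `w`-dominates the set `U`: for every `u ∈ U`, the `f`-sum over the closed
neighborhood of `u` is at least `w u`. -/
def WDominates [Fintype V] [DecidableEq V] (G : SimpleGraph V) [DecidableRel G.Adj]
    (w : V → ℕ) (f : V → ℕ) (U : Set V) : Prop :=
  ∀ u ∈ U, w u ≤ ∑ x ∈ closedNbr G u, f x

/-- The weighted domination number `γ_w(G)`: the minimum size of a `w`-dominating function. -/
noncomputable def gammaW [Fintype V] [DecidableEq V] (G : SimpleGraph V)
    [DecidableRel G.Adj] (w : V → ℕ) : ℕ :=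
  sInf {n | ∃ f : V → ℕ, WDominates G w f Set.univ ∧ ∑ v, f v = n}

/-- The weighted independent domination number `γ^i_w(G)`: the maximum, over all
independent sets `I`, of the minimum size of a function `w`-dominating `I`. -/
noncomputable def gammaIW [Fintype V] [DecidableEq V] (G : SimpleGraph V)
    [DecidableRel G.Adj] (w : V → ℕ) : ℕ :=
  sSup {m | ∃ I : Set V,
    (∀ u ∈ I, ∀ v ∈ I, u ≠ v → ¬ G.Adj u v) ∧
    m = sInf {n | ∃ f : V → ℕ, WDominates G w f I ∧ ∑ v, f v = n}}

/-- A set is dispersed if every two distinct vertices in it are at distance at least 3: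
they are non-adjacent and have no common neighbor. -/
def Dispersed (G : SimpleGraph V) (D : Set V) : Prop :=
  ∀ u ∈ D, ∀ v ∈ D, u ≠ v → ¬ G.Adj u v ∧ ∀ x, ¬(G.Adj u x ∧ G.Adj x v)

/-- `ρ_w(G)`: the maximum total weight of a dispersed set. -/
noncomputable def rhoW [Fintype V] (G : SimpleGraph V) (w : V → ℕ) : ℕ :=
  sSup {m | ∃ D : Finset V, Dispersed G ↑D ∧ ∑ v ∈ D, w v = m}

section Aux

variable [Fintype V] [DecidableEq V] (G : SimpleGraph V) [DecidableRel G.Adj]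

lemma mem_closedNbr' {x v : V} : x ∈ closedNbr G v ↔ x = v ∨ G.Adj v x := by
  simp [closedNbr]

lemma self_mem_closedNbr (v : V) : v ∈ closedNbr G v := by
  simp [closedNbr]

lemma closedNbr_symm {x v : V} (h : x ∈ closedNbr G v) : v ∈ closedNbr G x := by
  rw [mem_closedNbr'] at h ⊢
  rcases h with h | h
  · exact Or.inl h.symm
  · exact Or.inr h.symm

/-- Lower-bound direction: any dispersed set's weight is at most the size of
any `w`-dominating function, since closed neighborhoods of dispersed vertices
are pairwise disjoint. -/
lemma sum_w_le_sum_f {w f : V → ℕ} (hf : WDominates G w f Set.univ)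
    {D : Finset V} (hD : Dispersed G ↑D) : ∑ z ∈ D, w z ≤ ∑ v, f v := by
  have hdisj : (↑D : Set V).PairwiseDisjoint (closedNbr G) := by
    intro z1 h1 z2 h2 hne
    simp only [Function.onFun]
    rw [Finset.disjoint_left]
    intro x hx1 hx2
    obtain ⟨hna, hnc⟩ := hD z1 h1 z2 h2 hne
    rw [mem_closedNbr'] at hx1 hx2
    rcases hx1 with rfl | hx1
    · rcases hx2 with rfl | hx2
      · exact hne rfl
      · exact hna (G.adj_symm hx2)
    · rcases hx2 with rfl | hx2
      · exact hna hx1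
      · exact hnc x ⟨hx1, G.adj_symm hx2⟩
  calc ∑ z ∈ D, w z ≤ ∑ z ∈ D, ∑ x ∈ closedNbr G z, f x :=
        Finset.sum_le_sum fun z _ => hf z (Set.mem_univ z)
    _ = ∑ x ∈ D.biUnion (closedNbr G), f x := (Finset.sum_biUnion hdisj).symm
    _ ≤ ∑ v, f v := Finset.sum_le_sum_of_subset (Finset.subset_univ _)

/-- Main construction: for an interval graph there simultaneously exist a
`w`-dominating function `f` and a dispersed set `D` of equal total value. -/
lemma exists_opt_pair (a b : V → ℝ) (hab : ∀ v, a v ≤ b v)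
    (hadj : ∀ u v : V, u ≠ v →
      (G.Adj u v ↔ (Set.Icc (a u) (b u) ∩ Set.Icc (a v) (b v)).Nonempty)) :
    ∀ (n : ℕ) (w : V → ℕ), ∑ v, w v ≤ n →
      ∃ (f : V → ℕ) (D : Finset V), WDominates G w f Set.univ ∧ Dispersed G ↑D ∧
        (∀ z ∈ D, 0 < w z) ∧ ∑ v, f v = ∑ z ∈ D, w z := by
  have key : ∀ x y : V, x ∈ closedNbr G y → a x ≤ b y ∧ a y ≤ b x := by
    intro x y hx
    rw [mem_closedNbr'] at hx
    rcases hx with rfl | hx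
    · exact ⟨hab x, hab x⟩
    · obtain ⟨p, ⟨hp1, hp2⟩, ⟨hp3, hp4⟩⟩ := (hadj y x hx.ne).mp hx
      exact ⟨le_trans hp3 hp2, le_trans hp1 hp4⟩
  intro n
  induction n with
  | zero =>
    intro w hw
    refine ⟨fun _ => 0, ∅, fun u _ => ?_, by simp [Dispersed], by simp, by simp⟩
    have : w u = 0 := Finset.sum_eq_zero_iff.mp (Nat.le_zero.mp hw) u (Finset.mem_univ u)
    simp [this]
  | succ n ih =>
    intro w hw
    by_cases hex : ∃ z, 0 < w z
    swap
    · push_neg at hex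
      refine ⟨fun _ => 0, ∅, fun u _ => ?_, by simp [Dispersed], by simp, by simp⟩
      have := hex u
      simp
      omega
    obtain ⟨z0, hz0⟩ := hex
    set S : Finset V := Finset.univ.filter (fun z => 0 < w z) with hS
    have hSne : S.Nonempty := ⟨z0, by simp [hS, hz0]⟩
    obtain ⟨u, huS, humin⟩ := S.exists_min_image b hSne
    have hNne : (closedNbr G u).Nonempty := ⟨u, self_mem_closedNbr G u⟩
    obtain ⟨v, hvN, hvmax⟩ := (closedNbr G u).exists_max_image b hNne
    set c := w u with hc
    have hcpos : 0 < c := by simpa [hS] using (Finset.mem_filter.mp huS).2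
    set w' : V → ℕ := fun z => if z ∈ closedNbr G v then w z - c else w z with hw'
    have hw'le : ∀ z, w' z ≤ w z := by
      intro z; by_cases h : z ∈ closedNbr G v <;> simp [hw', h, Nat.sub_le]
    have huNv : u ∈ closedNbr G v := closedNbr_symm G hvN
    have hw'u : w' u = 0 := by simp [hw', huNv, hc]
    have hsumlt : ∑ z, w' z < ∑ z, w z := by
      apply Finset.sum_lt_sum (fun i _ => hw'le i)
      refine ⟨u, Finset.mem_univ u, ?_⟩
      rw [hw'u]
      omega
    obtain ⟨f', D', hdom', hdisp', hpos', hsum'⟩ := ih w' (by omega)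
    set f : V → ℕ := fun z => f' z + (if z = v then c else 0) with hf
    have hfsum : ∑ z, f z = ∑ z, f' z + c := by
      simp [hf, Finset.sum_add_distrib, Finset.sum_ite_eq' Finset.univ v (fun _ => c)]
    have hdom : WDominates G w f Set.univ := by
      intro z _
      have hsplit : ∑ x ∈ closedNbr G z, f x
          = ∑ x ∈ closedNbr G z, f' x + (if v ∈ closedNbr G z then c else 0) := by
        simp [hf, Finset.sum_add_distrib, Finset.sum_ite_eq' (closedNbr G z) v (fun _ => c)]
      rw [hsplit]
      have h1 := hdom' z (Set.mem_univ z)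
      by_cases hv : v ∈ closedNbr G z
      · have hz : z ∈ closedNbr G v := closedNbr_symm G hv
        have h2 : w' z = w z - c := by simp [hw', hz]
        rw [if_pos hv]
        omega
      · have hz : z ∉ closedNbr G v := fun h => hv (closedNbr_symm G h)
        have h2 : w' z = w z := by simp [hw', hz]
        rw [if_neg hv]
        omega
    have claim : ∀ z, 0 < w z → ∀ x, x ∈ closedNbr G u → x ∈ closedNbr G z →
        z ∈ closedNbr G v := by
      intro z hz x hxu hxz
      have hbu : b u ≤ b z := humin z (by simp [hS, hz])
      have hbx : b x ≤ b v := hvmax x hxu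
      have h1 := key v u hvN
      have h2 := key x z hxz
      by_cases hzv : z = v
      · rw [hzv]; exact self_mem_closedNbr G v
      · rw [mem_closedNbr']
        refine Or.inr ((hadj v z (Ne.symm hzv)).mpr ?_)
        rw [Set.Icc_inter_Icc]
        refine Set.nonempty_Icc.mpr ?_
        simp only [max_le_iff, le_min_iff]
        exact ⟨⟨hab v, le_trans h2.2 hbx⟩, le_trans h1.1 hbu, hab z⟩
    by_cases hcase : ∃ z ∈ D', z ∈ closedNbr G v
    · obtain ⟨z1, hz1D, hz1N⟩ := hcase
      refine ⟨f, D', hdom, hdisp',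
        fun z hz => lt_of_lt_of_le (hpos' z hz) (hw'le z), ?_⟩
      have hpoint : ∀ z ∈ D', w z = w' z + (if z = z1 then c else 0) := by
        intro z hzD
        by_cases hzz : z = z1
        · subst hzz
          have h0 := hpos' z hzD
          have h2 : w' z = w z - c := by simp [hw', hz1N]
          rw [if_pos rfl]
          omega
        · have hzN : z ∉ closedNbr G v := by
            intro hzN
            rw [mem_closedNbr'] at hzN hz1N
            obtain ⟨hna, hnc⟩ := hdisp' z (Finset.mem_coe.mpr hzD) z1
              (Finset.mem_coe.mpr hz1D) hzz
            rcases hzN with rfl | hzN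
            · rcases hz1N with h | h
              · exact hzz h.symm
              · exact hna h
            · rcases hz1N with rfl | h
              · exact hna (G.adj_symm hzN)
              · exact hnc v ⟨G.adj_symm hzN, h⟩
          rw [if_neg hzz]
          simp [hw', hzN]
      have hDsum : ∑ z ∈ D', w z = ∑ z ∈ D', w' z + c := by
        rw [Finset.sum_congr rfl hpoint, Finset.sum_add_distrib,
          Finset.sum_ite_eq' D' z1 (fun _ => c), if_pos hz1D]
      rw [hfsum, hsum']
      omega
    · push_neg at hcase
      have huD' : u ∉ D' := by
        intro h
        have := hpos' u h
        omega
      refine ⟨f, insert u D', hdom, ?_, ?_, ?_⟩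
      · intro p hp q hq hpq
        simp only [Finset.coe_insert, Set.mem_insert_iff, Finset.mem_coe] at hp hq
        have main : ∀ z ∈ D', ¬ G.Adj u z ∧ ∀ x, ¬(G.Adj u x ∧ G.Adj x z) := by
          intro z hzD
          have hwz : 0 < w z := by
            have h1 := hpos' z hzD
            have h2 : w' z = w z := by simp [hw', hcase z hzD]
            omega
          constructor
          · intro hadjuz
            exact hcase z hzD (claim z hwz z
              (mem_closedNbr' G |>.mpr (Or.inr hadjuz)) (self_mem_closedNbr G z))
          · rintro x ⟨hx1, hx2⟩
            exact hcase z hzD (claim z hwz x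
              ((mem_closedNbr' G).mpr (Or.inr hx1))
              ((mem_closedNbr' G).mpr (Or.inr (G.adj_symm hx2))))
        rcases hp with rfl | hp
        · rcases hq with rfl | hq
          · exact absurd rfl hpq
          · exact main q hq
        · rcases hq with rfl | hq
          · obtain ⟨h1, h2⟩ := main p hp
            exact ⟨fun h => h1 (G.adj_symm h),
              fun x ⟨hx1, hx2⟩ => h2 x ⟨G.adj_symm hx2, G.adj_symm hx1⟩⟩
          · exact hdisp' p (Finset.mem_coe.mpr hp) q (Finset.mem_coe.mpr hq) hpq
      · intro z hz
        rw [Finset.mem_insert] at hz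
        rcases hz with rfl | hz
        · omega
        · have h1 := hpos' z hz
          have h2 : w' z = w z := by simp [hw', hcase z hz]
          omega
      · rw [hfsum, hsum', Finset.sum_insert huD']
        have hsame : ∑ z ∈ D', w' z = ∑ z ∈ D', w z :=
          Finset.sum_congr rfl fun z hz => by simp [hw', hcase z hz]
        omega

end Aux

/-- In finite interval graphs, `γ_w(G) = ρ_w(G)` for every weight function `w`. -/
theorem interval_gamma_eq_rho [Fintype V] [DecidableEq V] (G : SimpleGraph V)
    [DecidableRel G.Adj]
    (a b : V → ℝ) (hab : ∀ v, a v ≤ b v)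
    (hadj : ∀ u v : V, u ≠ v →
      (G.Adj u v ↔ (Set.Icc (a u) (b u) ∩ Set.Icc (a v) (b v)).Nonempty))
    (w : V → ℕ) :
    gammaW G w = rhoW G w := by
  obtain ⟨f, D, hdom, hdisp, _, hsum⟩ :=
    exists_opt_pair G a b hab hadj (∑ v, w v) w le_rfl
  have hγmem : (∑ v, f v) ∈
      {n | ∃ f : V → ℕ, WDominates G w f Set.univ ∧ ∑ v, f v = n} := ⟨f, hdom, rfl⟩
  have hρmem : (∑ z ∈ D, w z) ∈
      {m | ∃ D : Finset V, Dispersed G ↑D ∧ ∑ v ∈ D, w v = m} := ⟨D, hdisp, rfl⟩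
  have hbdd : ∀ m ∈ {m | ∃ D : Finset V, Dispersed G ↑D ∧ ∑ v ∈ D, w v = m},
      m ≤ gammaW G w := by
    rintro m ⟨D', hD', hm⟩
    have hne : {n | ∃ f : V → ℕ, WDominates G w f Set.univ ∧ ∑ v, f v = n}.Nonempty :=
      ⟨∑ v, f v, hγmem⟩
    obtain ⟨f0, hf0, hf0sum⟩ := Nat.sInf_mem hne
    have : gammaW G w = ∑ v, f0 v := by rw [gammaW, hf0sum]
    rw [this, ← hm]
    exact sum_w_le_sum_f G hf0 hD'
  have h1 : gammaW G w ≤ ∑ v, f v := by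
    rw [gammaW]; exact Nat.sInf_le hγmem
  have h2 : (∑ z ∈ D, w z) ≤ rhoW G w := by
    rw [rhoW]; exact le_csSup ⟨gammaW G w, fun m hm => hbdd m hm⟩ hρmem
  have h3 : rhoW G w ≤ gammaW G w := by
    rw [rhoW]; exact csSup_le ⟨_, hρmem⟩ hbdd
  omega
end

section
/- Let G be a finite split graph, i.e., a finite simple graph whose vertex set is the disjoint union of a clique A and an independent set B. Then for every weight function w : V(G) → ℕ, γ_w(G) = γ^i_w(G); that is, the weighted domination number equals the weighted independent domination number. -/
open Finset

variable {V : Type*}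

/-- In a finite split graph, `γ_w(G) = γ^i_w(G)` for every weight function `w`. -/
theorem split_gamma_eq_gammaI [Fintype V] [DecidableEq V] (G : SimpleGraph V)
    [DecidableRel G.Adj]
    (A B : Set V) (hunion : A ∪ B = Set.univ) (hdisj : Disjoint A B)
    (hA : G.IsClique A)
    (hB : ∀ u ∈ B, ∀ v ∈ B, ¬ G.Adj u v)
    (w : V → ℕ) :
    gammaW G w = gammaIW G w := by
  classical
  have hself : ∀ u : V, u ∈ closedNbr G u := fun u => Finset.mem_insert_self u _
  have hwdom : ∀ U : Set V, WDominates G w w U := fun U u _ =>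
    Finset.single_le_sum (fun i _ => Nat.zero_le (w i)) (hself u)
  have hABmem : ∀ v : V, v ∈ A ∨ v ∈ B := by
    intro v
    have hv : v ∈ A ∪ B := by rw [hunion]; exact Set.mem_univ v
    exact hv
  -- gammaW is attained by some function fs
  have hWne : {n | ∃ f : V → ℕ, WDominates G w f Set.univ ∧ ∑ v, f v = n}.Nonempty :=
    ⟨∑ v, w v, w, hwdom _, rfl⟩
  obtain ⟨fs, hfsdom, hfssum⟩ := Nat.sInf_mem hWne
  have hfssum' : ∑ v, fs v = gammaW G w := hfssum
  -- every member of the gammaIW-defining set is at most gammaW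
  have hub : ∀ m ∈ {m | ∃ I : Set V, (∀ u ∈ I, ∀ v ∈ I, u ≠ v → ¬ G.Adj u v) ∧
      m = sInf {n | ∃ f : V → ℕ, WDominates G w f I ∧ ∑ v, f v = n}}, m ≤ gammaW G w := by
    rintro m ⟨I, hI, rfl⟩
    exact Nat.sInf_le ⟨fs, fun u _ => hfsdom u (Set.mem_univ u), hfssum'⟩
  have hbdd : BddAbove {m | ∃ I : Set V, (∀ u ∈ I, ∀ v ∈ I, u ≠ v → ¬ G.Adj u v) ∧
      m = sInf {n | ∃ f : V → ℕ, WDominates G w f I ∧ ∑ v, f v = n}} := ⟨gammaW G w, hub⟩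
  have hBind : ∀ u ∈ B, ∀ v ∈ B, u ≠ v → ¬ G.Adj u v := fun u hu v hv _ => hB u hu v hv
  have hmBmem : sInf {n | ∃ f : V → ℕ, WDominates G w f B ∧ ∑ v, f v = n} ∈
      {m | ∃ I : Set V, (∀ u ∈ I, ∀ v ∈ I, u ≠ v → ¬ G.Adj u v) ∧
      m = sInf {n | ∃ f : V → ℕ, WDominates G w f I ∧ ∑ v, f v = n}} := ⟨B, hBind, rfl⟩
  have hle1 : gammaIW G w ≤ gammaW G w := csSup_le ⟨_, hmBmem⟩ hub
  -- closed neighborhood of an isolated vertex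
  have hclosedIso : ∀ z : V, (∀ x, ¬ G.Adj z x) → closedNbr G z = {z} := by
    intro z hz
    have hnb : G.neighborFinset z = ∅ := by
      apply Finset.eq_empty_of_forall_notMem
      intro x hx
      exact hz x ((SimpleGraph.mem_neighborFinset G z x).mp hx)
    rw [closedNbr, hnb]
    rfl
  have hIsoLB : ∀ (f : V → ℕ) (U : Set V), WDominates G w f U →
      ∀ z ∈ U, (∀ x, ¬ G.Adj z x) → w z ≤ f z := by
    intro f U hf z hz hiso
    have := hf z hz
    rwa [hclosedIso z hiso, Finset.sum_singleton] at this
  refine le_antisymm ?_ hle1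
  by_cases hAne : A.Nonempty
  case neg =>
    have hBall : ∀ v : V, v ∈ B := fun v => (hABmem v).resolve_left fun hv => hAne ⟨v, hv⟩
    have hmem : gammaW G w ∈ {m | ∃ I : Set V, (∀ u ∈ I, ∀ v ∈ I, u ≠ v → ¬ G.Adj u v) ∧
        m = sInf {n | ∃ f : V → ℕ, WDominates G w f I ∧ ∑ v, f v = n}} :=
      ⟨Set.univ, fun u _ v _ _ h => hB u (hBall u) v (hBall v) h, rfl⟩
    exact le_csSup hbdd hmem
  case pos =>
  obtain ⟨a₀, ha₀⟩ := hAne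
  set Af : Finset V := Finset.univ.filter (· ∈ A) with hAf
  have hAfmem : ∀ v : V, v ∈ Af ↔ v ∈ A := by
    intro v; simp [hAf]
  have hAfne : Af.Nonempty := ⟨a₀, (hAfmem a₀).mpr ha₀⟩
  obtain ⟨a₁, ha₁Af, ha₁max⟩ := Finset.exists_max_image Af w hAfne
  have ha₁A : a₁ ∈ A := (hAfmem a₁).mp ha₁Af
  set Z : Finset V := Finset.univ.filter (fun v => v ∈ B ∧ ∀ x, ¬ G.Adj v x) with hZ
  set T : Finset V := Finset.univ.filter (fun v => v ∈ B ∧ ∃ x, G.Adj v x) with hT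
  have hZmem : ∀ z : V, z ∈ Z ↔ z ∈ B ∧ ∀ x, ¬ G.Adj z x := by
    intro z; simp [hZ]
  have hTmem : ∀ b : V, b ∈ T ↔ b ∈ B ∧ ∃ x, G.Adj b x := by
    intro b; simp [hT]
  set π : V → V := fun b => if h : ∃ x, G.Adj b x then h.choose else b with hπ
  have hπadj : ∀ b : V, (∃ x, G.Adj b x) → G.Adj b (π b) := by
    intro b h
    rw [hπ]
    simp only [dif_pos h]
    exact h.choose_spec
  have hπA : ∀ b ∈ T, π b ∈ A := by
    intro b hb
    rw [hTmem] at hb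
    rcases hABmem (π b) with h | h
    · exact h
    · exact absurd (hπadj b hb.2) (hB b hb.1 (π b) h)
  -- a minimum function dominating B
  have hBne : {n | ∃ f : V → ℕ, WDominates G w f B ∧ ∑ v, f v = n}.Nonempty :=
    ⟨∑ v, w v, w, hwdom _, rfl⟩
  obtain ⟨f₁, hf₁dom, hf₁sum⟩ := Nat.sInf_mem hBne
  -- the independent set I₂ and a minimum function dominating it
  set I₂ : Set V := insert a₁ {v | v ∈ B ∧ ∀ x, ¬ G.Adj v x} with hI₂
  have hI₂ind : ∀ u ∈ I₂, ∀ v ∈ I₂, u ≠ v → ¬ G.Adj u v := by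
    intro u hu v hv hne hadj
    rcases Set.mem_insert_iff.mp hu with rfl | hu'
    · rcases Set.mem_insert_iff.mp hv with rfl | hv'
      · exact hne rfl
      · exact hv'.2 u hadj.symm
    · exact hu'.2 v hadj
  have hI₂ne : {n | ∃ f : V → ℕ, WDominates G w f I₂ ∧ ∑ v, f v = n}.Nonempty :=
    ⟨∑ v, w v, w, hwdom _, rfl⟩
  obtain ⟨f₂, hf₂dom, hf₂sum⟩ := Nat.sInf_mem hI₂ne
  have hdisjNZ : Disjoint (closedNbr G a₁) Z := by
    rw [Finset.disjoint_left]
    intro x hx hxZ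
    rw [hZmem] at hxZ
    rcases Finset.mem_insert.mp hx with rfl | hx'
    · exact Set.disjoint_left.mp hdisj ha₁A hxZ.1
    · exact hxZ.2 a₁ ((SimpleGraph.mem_neighborFinset G a₁ x).mp hx').symm
  have hm₂lb : w a₁ + ∑ z ∈ Z, w z ≤ ∑ v, f₂ v := by
    have h1 : w a₁ ≤ ∑ x ∈ closedNbr G a₁, f₂ x := hf₂dom a₁ (Set.mem_insert _ _)
    have h2 : ∑ z ∈ Z, w z ≤ ∑ z ∈ Z, f₂ z := by
      refine Finset.sum_le_sum fun z hz => ?_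
      have hz' := (hZmem z).mp hz
      exact hIsoLB f₂ I₂ hf₂dom z (Set.mem_insert_of_mem _ ⟨hz'.1, hz'.2⟩) hz'.2
    calc w a₁ + ∑ z ∈ Z, w z ≤ (∑ x ∈ closedNbr G a₁, f₂ x) + ∑ z ∈ Z, f₂ z :=
          Nat.add_le_add h1 h2
      _ = ∑ x ∈ closedNbr G a₁ ∪ Z, f₂ x := (Finset.sum_union hdisjNZ).symm
      _ ≤ ∑ v, f₂ v := Finset.sum_le_sum_of_subset (Finset.subset_univ _)
  -- the modified function g
  set S : ℕ := (∑ v ∈ Af, f₁ v) + (∑ v ∈ T, f₁ v) with hS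
  set t : ℕ := w a₁ - S with ht
  set q : V → ℕ := fun v => ∑ b ∈ T.filter (fun b => π b = v), f₁ b with hq
  set g : V → ℕ := fun v =>
    (if v ∈ A then f₁ v else 0) + q v + (if v = a₁ then t else 0) +
      (if v ∈ B ∧ ∀ x, ¬ G.Adj v x then w v else 0) with hg
  clear_value g q t S π T Z Af
  have hsumq : ∑ v, q v = ∑ b ∈ T, f₁ b := by
    rw [hq]
    exact Finset.sum_fiberwise_of_maps_to (fun b _ => Finset.mem_univ (π b)) f₁
  have hgsum : ∑ v, g v = S + t + ∑ z ∈ Z, w z := by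
    have h1 : ∑ v : V, (if v ∈ A then f₁ v else 0) = ∑ v ∈ Af, f₁ v := by
      rw [hAf]; exact (Finset.sum_filter _ _).symm
    have h3 : ∑ v : V, (if v = a₁ then t else 0) = t := by
      rw [Finset.sum_ite_eq' Finset.univ a₁ fun _ => t]
      exact if_pos (Finset.mem_univ a₁)
    have h4 : ∑ v : V, (if v ∈ B ∧ ∀ x, ¬ G.Adj v x then w v else 0) = ∑ z ∈ Z, w z := by
      rw [hZ]; exact (Finset.sum_filter _ _).symm
    calc ∑ v, g v
        = (∑ v : V, (if v ∈ A then f₁ v else 0)) + (∑ v, q v) +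
          (∑ v : V, (if v = a₁ then t else 0)) +
          (∑ v : V, (if v ∈ B ∧ ∀ x, ¬ G.Adj v x then w v else 0)) := by
          rw [hg]; simp [Finset.sum_add_distrib]
      _ = S + t + ∑ z ∈ Z, w z := by rw [h1, hsumq, h3, h4, hS]
  -- lower bound on the size of f₁
  have hdAfT : Disjoint Af T := by
    rw [Finset.disjoint_left]
    intro x hx hx'
    exact Set.disjoint_left.mp hdisj ((hAfmem x).mp hx) ((hTmem x).mp hx').1
  have hdAfZ : Disjoint Af Z := by
    rw [Finset.disjoint_left]
    intro x hx hx'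
    exact Set.disjoint_left.mp hdisj ((hAfmem x).mp hx) ((hZmem x).mp hx').1
  have hdTZ : Disjoint T Z := by
    rw [Finset.disjoint_left]
    intro x hx hx'
    obtain ⟨y, hy⟩ := ((hTmem x).mp hx).2
    exact ((hZmem x).mp hx').2 y hy
  have hm₁lb : S + ∑ z ∈ Z, w z ≤ ∑ v, f₁ v := by
    have hsub : ∑ v ∈ Af ∪ T ∪ Z, f₁ v ≤ ∑ v, f₁ v :=
      Finset.sum_le_sum_of_subset (Finset.subset_univ _)
    rw [Finset.sum_union (Finset.disjoint_union_left.mpr ⟨hdAfZ, hdTZ⟩),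
      Finset.sum_union hdAfT] at hsub
    have hZw : ∑ z ∈ Z, w z ≤ ∑ z ∈ Z, f₁ z := by
      refine Finset.sum_le_sum fun z hz => ?_
      have hz' := (hZmem z).mp hz
      exact hIsoLB f₁ B hf₁dom z hz'.1 hz'.2
    clear * - hsub hZw hS
    omega
  -- g dominates everything
  have hgdom : WDominates G w g Set.univ := by
    intro u _
    rcases hABmem u with huA | huB
    · -- u ∈ A
      have hsub : Af ⊆ closedNbr G u := by
        intro v hv
        have hvA : v ∈ A := (hAfmem v).mp hv
        rcases eq_or_ne v u with rfl | hne
        · exact hself v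
        · exact Finset.mem_insert_of_mem
            ((SimpleGraph.mem_neighborFinset G u v).mpr (hA huA hvA hne.symm))
      have h1 : ∑ v ∈ Af, (if v ∈ A then f₁ v else 0) = ∑ v ∈ Af, f₁ v :=
        Finset.sum_congr rfl fun v hv => if_pos ((hAfmem v).mp hv)
      have h2 : ∑ v ∈ Af, q v = ∑ b ∈ T, f₁ b := by
        rw [hq]
        exact Finset.sum_fiberwise_of_maps_to
          (fun b hb => (hAfmem (π b)).mpr (hπA b hb)) f₁
      have h3 : ∑ v ∈ Af, (if v = a₁ then t else 0) = t := by
        rw [Finset.sum_ite_eq' Af a₁ fun _ => t]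
        exact if_pos ha₁Af
      have hAfg : S + t ≤ ∑ v ∈ Af, g v := by
        have heq : ∑ v ∈ Af, g v = (∑ v ∈ Af, f₁ v) + (∑ b ∈ T, f₁ b) + t +
            ∑ v ∈ Af, (if v ∈ B ∧ ∀ x, ¬ G.Adj v x then w v else 0) := by
          rw [hg]
          simp only [Finset.sum_add_distrib]
          rw [h1, h2, h3]
        rw [heq, hS]
        clear * - heq
        omega
      have hwa : w u ≤ w a₁ := ha₁max u ((hAfmem u).mpr huA)
      have hwt : w a₁ ≤ S + t := by rw [ht]; clear * - ht; omega
      calc w u ≤ S + t := le_trans hwa hwt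
        _ ≤ ∑ v ∈ Af, g v := hAfg
        _ ≤ ∑ x ∈ closedNbr G u, g x := Finset.sum_le_sum_of_subset hsub
    · by_cases hiso : ∀ x, ¬ G.Adj u x
      · -- isolated vertex of B
        rw [hclosedIso u hiso, Finset.sum_singleton]
        simp only [hg]
        rw [if_pos (show u ∈ B ∧ ∀ x, ¬ G.Adj u x from ⟨huB, hiso⟩)]
        exact Nat.le_add_left _ _
      · -- non-isolated vertex of B
        push_neg at hiso
        have huT : u ∈ T := (hTmem u).mpr ⟨huB, hiso⟩
        have hπuadj : G.Adj u (π u) := hπadj u hiso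
        have hπunb : π u ∈ G.neighborFinset u :=
          (SimpleGraph.mem_neighborFinset G u (π u)).mpr hπuadj
        have hnb : ∀ x ∈ G.neighborFinset u, f₁ x + q x ≤ g x := by
          intro x hx
          have hxadj : G.Adj u x := (SimpleGraph.mem_neighborFinset G u x).mp hx
          have hxA : x ∈ A := by
            rcases hABmem x with h | h
            · exact h
            · exact absurd hxadj (hB u huB x h)
          simp only [hg]
          rw [if_pos hxA]
          exact le_trans (Nat.le_add_right _ _) (Nat.le_add_right _ _)
        have hqπ : f₁ u ≤ q (π u) := by
          rw [hq]
          exact Finset.single_le_sum (fun i _ => Nat.zero_le _)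
            (Finset.mem_filter.mpr ⟨huT, rfl⟩)
        have hqsum : q (π u) ≤ ∑ x ∈ G.neighborFinset u, q x :=
          Finset.single_le_sum (fun i _ => Nat.zero_le _) hπunb
        have hfsumN : w u ≤ f₁ u + ∑ x ∈ G.neighborFinset u, f₁ x := by
          have := hf₁dom u huB
          rwa [closedNbr, Finset.sum_insert (G.notMem_neighborFinset_self u)] at this
        have hkey : w u ≤ ∑ x ∈ G.neighborFinset u, g x := by
          calc w u ≤ f₁ u + ∑ x ∈ G.neighborFinset u, f₁ x := hfsumN
            _ ≤ (∑ x ∈ G.neighborFinset u, q x) + ∑ x ∈ G.neighborFinset u, f₁ x := by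
                have h' := le_trans hqπ hqsum
                clear * - h'
                omega
            _ = ∑ x ∈ G.neighborFinset u, (f₁ x + q x) := by
                rw [Finset.sum_add_distrib]
                clear * -
                omega
            _ ≤ ∑ x ∈ G.neighborFinset u, g x := Finset.sum_le_sum hnb
        refine le_trans hkey (Finset.sum_le_sum_of_subset ?_)
        rw [closedNbr]
        exact Finset.subset_insert _ _
  -- put everything together
  have hγle : gammaW G w ≤ ∑ v, g v := Nat.sInf_le ⟨g, hgdom, rfl⟩
  have hmax : ∑ v, g v ≤ max (∑ v, f₁ v) (∑ v, f₂ v) := by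
    rw [hgsum]
    rcases le_total (w a₁) S with h | h
    · refine le_trans ?_ (le_max_left _ _)
      rw [ht]
      clear * - h hm₁lb
      omega
    · refine le_trans ?_ (le_max_right _ _)
      rw [ht]
      clear * - h hm₂lb
      omega
  have hm₂mem : sInf {n | ∃ f : V → ℕ, WDominates G w f I₂ ∧ ∑ v, f v = n} ∈
      {m | ∃ I : Set V, (∀ u ∈ I, ∀ v ∈ I, u ≠ v → ¬ G.Adj u v) ∧
      m = sInf {n | ∃ f : V → ℕ, WDominates G w f I ∧ ∑ v, f v = n}} := ⟨I₂, hI₂ind, rfl⟩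
  calc gammaW G w ≤ ∑ v, g v := hγle
    _ ≤ max (∑ v, f₁ v) (∑ v, f₂ v) := hmax
    _ ≤ gammaIW G w := by
        refine max_le ?_ ?_
        · rw [hf₁sum]
          exact le_csSup hbdd hmBmem
        · rw [hf₂sum]
          exact le_csSup hbdd hm₂mem
end

section
/- There exist a finite chordal graph G (a finite simple graph with no induced cycle of length greater than 3) and a weight function w : V(G) → ℕ such that γ^i_w(G) < γ_w(G); in fact there is such an example with γ^i_w(G) = 4 and γ_w(G) = 5. -/
open Finset

variable {V : Type*}

/-!
The example is the 3-sun on the triangle `0 1 2`, with ears `3 ∼ 0 1`, `4 ∼ 1 2`, `5 ∼ 2 0`, plus a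
pendant vertex `6 ∼ 3`; the weights are `2, 3, 3, 1` on `3, 4, 5, 6` and `0` on the triangle.

A `w`-dominating `f` puts `3` on each of `N[4] = {1,2,4}` and `N[5] = {0,2,5}` and `1` on
`N[6] = {3,6}`; with total `4` this forces `f 2 = 3` and leaves only `1` for `N[3] = {0,1,3,6}`,
which needs `2`. Hence `γ_w = 5`. The independent set `{4,5,6}` already needs `4`, and every
independent set misses `3` (use `f 3 = 1`, `f 2 = 3`) or `6` (use `f 0 = f 1 = 1`, `f 2 = 2`).

Chordality: a vertex on a chordless cycle of length `≥ 4` has two non-adjacent neighbours on it,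
so such a cycle survives the deletion of simplicial vertices; here deleting `4, 5, 6`, then `3`,
then the triangle empties the graph.
-/

namespace SimpleGraph

variable (G : SimpleGraph V)

def IsChordal : Prop :=
  ∀ ⦃v : V⦄ (c : G.Walk v v), c.IsCycle → 3 < c.length → ¬ c.IsChordless

def removeSimplicial [DecidableEq V] [DecidableRel G.Adj] (S : Finset V) : Finset V :=
  {u ∈ S | ∃ a ∈ S, ∃ b ∈ S, G.Adj u a ∧ G.Adj u b ∧ a ≠ b ∧ ¬ G.Adj a b}

namespace Walk

variable {G} {u v : V}

theorem IsCycle.not_adj_snd_penultimate {p : G.Walk u u} (hc : p.IsCycle) (hch : p.IsChordless)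
    (hlen : 3 < p.length) : ¬ G.Adj p.snd p.penultimate := by
  intro hadj
  have hnil := hc.not_nil
  have hpath : p.tail.IsPath := ((cons_isCycle_iff _ _).mp (p.cons_tail_eq hnil ▸ hc)).1
  have hedges : p.edges = s(u, p.snd) :: p.tail.edges := by
    rw [← edges_cons (p.adj_snd hnil), p.cons_tail_eq hnil]
  have hedge := hch.mem_edges (p.getVert_mem_support _) (p.getVert_mem_support _) hadj
  rw [hedges, List.mem_cons] at hedge
  rcases hedge with hedge | hedge
  · rcases Sym2.eq_iff.mp hedge with ⟨hsnd, -⟩ | ⟨-, hpen⟩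
    · exact (p.adj_snd hnil).ne hsnd.symm
    · exact (p.adj_penultimate hnil).ne hpen
  · -- the tail is a path from `p.snd`, so its only edge at `p.snd` goes to `p.getVert 2`
    have hpen := hpath.eq_snd_of_mem_edges hedge
    rw [snd, getVert_tail] at hpen
    have := hc.getVert_injOn (by simp; omega) (by simp; omega) hpen
    omega

theorem IsCycle.exists_adj_adj_not_adj {p : G.Walk u u} (hc : p.IsCycle) (hch : p.IsChordless)
    (hlen : 3 < p.length) (hv : v ∈ p.support) :
    ∃ a ∈ p.support, ∃ b ∈ p.support, G.Adj v a ∧ G.Adj v b ∧ a ≠ b ∧ ¬ G.Adj a b := by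
  classical
  set q := p.rotate v hv
  have hq : q.IsCycle := hc.rotate hv
  have hmem : ∀ {x}, x ∈ q.support → x ∈ p.support := (p.mem_support_rotate_iff v hv).mp
  have hqch : q.IsChordless := isChordless_iff_forall_mem_edges.mpr fun x y hx hy hxy =>
    (p.rotate_edges v hv).perm.mem_iff.mpr <| hch.mem_edges (hmem hx) (hmem hy) hxy
  exact ⟨q.snd, hmem (q.getVert_mem_support _), q.penultimate, hmem (q.getVert_mem_support _),
    q.adj_snd hq.not_nil, (q.adj_penultimate hq.not_nil).symm, hq.snd_ne_penultimate,
    hq.not_adj_snd_penultimate hqch (by rwa [length_rotate])⟩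

variable [DecidableEq V] [DecidableRel G.Adj]

theorem IsCycle.support_subset_removeSimplicial {p : G.Walk u u} (hc : p.IsCycle)
    (hch : p.IsChordless) (hlen : 3 < p.length) {S : Finset V} (hS : ∀ x ∈ p.support, x ∈ S) :
    ∀ x ∈ p.support, x ∈ G.removeSimplicial S := by
  intro x hx
  obtain ⟨a, ha, b, hb, hxa, hxb, hab, hnab⟩ := hc.exists_adj_adj_not_adj hch hlen hx
  exact Finset.mem_filter.mpr ⟨hS x hx, a, hS a ha, b, hS b hb, hxa, hxb, hab, hnab⟩

theorem IsCycle.support_subset_iterate_removeSimplicial [Fintype V] {p : G.Walk u u}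
    (hc : p.IsCycle) (hch : p.IsChordless) (hlen : 3 < p.length) (n : ℕ) :
    ∀ x ∈ p.support, x ∈ G.removeSimplicial^[n] Finset.univ := by
  induction n with
  | zero => exact fun x _ => Finset.mem_univ x
  | succ n ih =>
    rw [Function.iterate_succ_apply']
    exact hc.support_subset_removeSimplicial hch hlen ih

end Walk

theorem isChordal_of_iterate_removeSimplicial_eq_empty [Fintype V] [DecidableEq V]
    [DecidableRel G.Adj] {n : ℕ} (h : G.removeSimplicial^[n] Finset.univ = ∅) : G.IsChordal :=
  fun v c hc hlen hch => by
    simpa [h] using hc.support_subset_iterate_removeSimplicial hch hlen n v c.start_mem_support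

end SimpleGraph

section Domination

variable [Fintype V] [DecidableEq V] (G : SimpleGraph V) [DecidableRel G.Adj] (w : V → ℕ)

noncomputable def minWDomSize (U : Set V) : ℕ :=
  sInf {n | ∃ f : V → ℕ, WDominates G w f U ∧ ∑ v, f v = n}

variable {G w}

theorem wDominates_self (U : Set V) : WDominates G w w U := fun u _ =>
  Finset.single_le_sum (fun _ _ => Nat.zero_le _) (Finset.mem_insert_self u _)

theorem WDominates.mono {f : V → ℕ} {U U' : Set V} (h : WDominates G w f U') (hU : U ⊆ U') :
    WDominates G w f U := fun u hu => h u (hU hu)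

theorem minWDomSize_le {f : V → ℕ} {U : Set V} (hf : WDominates G w f U) :
    minWDomSize G w U ≤ ∑ v, f v :=
  Nat.sInf_le ⟨f, hf, rfl⟩

theorem le_minWDomSize {n : ℕ} {U : Set V} (h : ∀ f, WDominates G w f U → n ≤ ∑ v, f v) :
    n ≤ minWDomSize G w U :=
  le_csInf ⟨_, w, wDominates_self U, rfl⟩ fun _ ⟨f, hf, hfm⟩ => hfm ▸ h f hf

theorem minWDomSize_mono {U U' : Set V} (hU : U ⊆ U') :
    minWDomSize G w U ≤ minWDomSize G w U' :=
  le_minWDomSize fun _ hf => minWDomSize_le (hf.mono hU)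

theorem gammaW_eq_minWDomSize : gammaW G w = minWDomSize G w Set.univ := rfl

theorem gammaIW_le {n : ℕ} (h : ∀ I, G.IsIndepSet I → minWDomSize G w I ≤ n) :
    gammaIW G w ≤ n :=
  csSup_le ⟨_, ∅, Set.pairwise_empty _, rfl⟩ fun _ ⟨I, hI, hm⟩ => hm ▸ h I hI

theorem minWDomSize_le_gammaIW {I : Set V} (hI : G.IsIndepSet I) :
    minWDomSize G w I ≤ gammaIW G w :=
  le_csSup ⟨∑ v, w v, fun _ ⟨_, _, hm⟩ => hm ▸ minWDomSize_le (wDominates_self _)⟩ ⟨I, hI, rfl⟩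

end Domination

def pendantSun : SimpleGraph (Fin 7) := SimpleGraph.fromRel fun a b =>
  (a, b) ∈ [(0, 1), (1, 2), (2, 0), (3, 0), (3, 1), (4, 1), (4, 2), (5, 2), (5, 0), (6, 3)]

instance : DecidableRel pendantSun.Adj :=
  inferInstanceAs (DecidableRel (SimpleGraph.fromRel _).Adj)

def pendantSunWeight : Fin 7 → ℕ := ![0, 0, 0, 2, 3, 3, 1]

theorem pendantSun_isChordal : pendantSun.IsChordal :=
  pendantSun.isChordal_of_iterate_removeSimplicial_eq_empty (n := 3) (by decide)

theorem closedNbr_pendantSun :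
    closedNbr pendantSun 3 = {0, 1, 3, 6} ∧ closedNbr pendantSun 4 = {1, 2, 4} ∧
      closedNbr pendantSun 5 = {0, 2, 5} ∧ closedNbr pendantSun 6 = {3, 6} := by
  decide

theorem four_le_sum_of_wDominates_pendantSun {f : Fin 7 → ℕ}
    (hf : WDominates pendantSun pendantSunWeight f {4, 5, 6}) : 4 ≤ ∑ v, f v := by
  have h4 := hf 4 (by simp)
  have h5 := hf 5 (by simp)
  have h6 := hf 6 (by simp)
  simp only [pendantSunWeight, Fin.isValue, Matrix.cons_val, closedNbr_pendantSun, mem_insert,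
    Fin.reduceEq, mem_singleton, or_self, not_false_eq_true, sum_insert, sum_singleton,
    Fin.sum_univ_seven, ge_iff_le] at h4 h5 h6 ⊢
  omega

theorem five_le_sum_of_wDominates_pendantSun {f : Fin 7 → ℕ}
    (hf : WDominates pendantSun pendantSunWeight f Set.univ) : 5 ≤ ∑ v, f v := by
  have h3 := hf 3 trivial
  have h4 := hf 4 trivial
  have h5 := hf 5 trivial
  have h6 := hf 6 trivial
  simp only [pendantSunWeight, Fin.isValue, Matrix.cons_val, closedNbr_pendantSun, mem_insert,
    zero_ne_one, Fin.reduceEq, mem_singleton, or_self, not_false_eq_true, sum_insert, sum_singleton,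
    Fin.sum_univ_seven, ge_iff_le] at h3 h4 h5 h6 ⊢
  omega

theorem gammaW_pendantSun : gammaW pendantSun pendantSunWeight = 5 := by
  rw [gammaW_eq_minWDomSize]
  exact le_antisymm
    (minWDomSize_le (f := ![0, 0, 3, 2, 0, 0, 0]) fun u _ => by revert u; decide)
    (le_minWDomSize fun _ => five_le_sum_of_wDominates_pendantSun)

theorem minWDomSize_pendantSun_le_four {I : Set (Fin 7)} (hI : pendantSun.IsIndepSet I) :
    minWDomSize pendantSun pendantSunWeight I ≤ 4 := by
  by_cases h3 : 3 ∈ I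
  · have h6 : I ⊆ {6}ᶜ := fun u hu (h : u = 6) => hI h3 (h ▸ hu) (by decide) (by decide)
    exact (minWDomSize_mono h6).trans
      (minWDomSize_le (f := ![1, 1, 2, 0, 0, 0, 0]) fun u (hu : u ≠ 6) => by revert u; decide)
  · exact (minWDomSize_mono (Set.subset_compl_singleton_iff.mpr h3)).trans
      (minWDomSize_le (f := ![0, 0, 3, 1, 0, 0, 0]) fun u (hu : u ≠ 3) => by revert u; decide)

theorem gammaIW_pendantSun : gammaIW pendantSun pendantSunWeight = 4 :=
  le_antisymm (gammaIW_le fun _ => minWDomSize_pendantSun_le_four)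
    ((le_minWDomSize fun _ => four_le_sum_of_wDominates_pendantSun).trans
      (minWDomSize_le_gammaIW (I := {4, 5, 6}) (by simp [Set.pairwise_insert, pendantSun])))

/-- There is a finite chordal graph (no induced cycle of length greater than 3)
and a weight function with `γ^i_w(G) < γ_w(G)`; in fact with `γ^i_w(G) = 4`
and `γ_w(G) = 5`. -/
theorem exists_chordal_gammaI_lt_gamma :
    ∃ (V : Type) (instF : Fintype V) (instE : DecidableEq V) (G : SimpleGraph V)
      (instD : DecidableRel G.Adj) (w : V → ℕ),
      (¬ ∃ (v : V) (c : G.Walk v v), c.IsCycle ∧ 3 < c.length ∧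
        ∀ x ∈ c.support, ∀ y ∈ c.support, G.Adj x y → s(x, y) ∈ c.edges) ∧
      @gammaIW V instF instE G instD w < @gammaW V instF instE G instD w ∧
      @gammaIW V instF instE G instD w = 4 ∧ @gammaW V instF instE G instD w = 5 := by
  refine ⟨Fin 7, inferInstance, inferInstance, pendantSun, inferInstance, pendantSunWeight, ?_,
    by rw [gammaIW_pendantSun, gammaW_pendantSun]; norm_num,
    gammaIW_pendantSun, gammaW_pendantSun⟩
  rintro ⟨v, c, hc, hlen, hch⟩
  exact pendantSun_isChordal c hc hlen
    (SimpleGraph.Walk.isChordless_iff_forall_mem_edges.mpr fun x y hx hy => hch x hx y hy)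
end

section
/- Let v_1 = [x_1, y_1], ..., v_n = [x_n, y_n] be closed real intervals enumerated so that y_1 ≤ y_2 ≤ ... ≤ y_n, let G be the interval graph on these intervals (distinct intervals adjacent if and only if they intersect), and let w : {v_1,...,v_n} → ℕ be a weight function. Then there exists a w-dominating function f : {v_1,...,v_n} → ℕ such that for every w-dominating function h and every k ∈ {1,...,n}, Σ_{i=1}^{k} f(v_i) ≤ Σ_{i=1}^{k} h(v_i). -/
open Finset

variable {V : Type*}

section Greedy

variable {n : ℕ}

lemma self_mem_closedNbr_s8 (G : SimpleGraph (Fin n)) [DecidableRel G.Adj] (v : Fin n) :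
    v ∈ closedNbr G v := Finset.mem_insert_self _ _

def mvert (G : SimpleGraph (Fin n)) [DecidableRel G.Adj] (v : Fin n) : Fin n :=
  (closedNbr G v).max' ⟨v, self_mem_closedNbr_s8 G v⟩

lemma mvert_mem (G : SimpleGraph (Fin n)) [DecidableRel G.Adj] (v : Fin n) :
    mvert G v ∈ closedNbr G v := Finset.max'_mem _ _

lemma le_mvert (G : SimpleGraph (Fin n)) [DecidableRel G.Adj] {v t : Fin n}
    (ht : t ∈ closedNbr G v) : t ≤ mvert G v := Finset.le_max' _ _ ht

lemma self_le_mvert (G : SimpleGraph (Fin n)) [DecidableRel G.Adj] (v : Fin n) :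
    v ≤ mvert G v := le_mvert G (self_mem_closedNbr_s8 G v)

def greedy (G : SimpleGraph (Fin n)) [DecidableRel G.Adj] (w : Fin n → ℕ) : Fin n → ℕ
  | k => (Finset.univ.filter (fun v => mvert G v = k)).sup
      (fun v => w v - ∑ p ∈ ((closedNbr G v).filter (fun t => t < k)).attach,
        greedy G w p.1)
termination_by k => (k : ℕ)
decreasing_by exact (Finset.mem_filter.mp p.2).2

lemma greedy_eq (G : SimpleGraph (Fin n)) [DecidableRel G.Adj] (w : Fin n → ℕ) (k : Fin n) :
    greedy G w k = (Finset.univ.filter (fun v => mvert G v = k)).sup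
      (fun v => w v - ∑ t ∈ (closedNbr G v).filter (fun t => t < k), greedy G w t) := by
  rw [greedy]
  congr 1
  funext v
  congr 1
  exact Finset.sum_attach _ _

lemma closedNbr_split (G : SimpleGraph (Fin n)) [DecidableRel G.Adj] (u : Fin n) :
    closedNbr G u = insert (mvert G u) ((closedNbr G u).filter (fun t => t < mvert G u)) := by
  ext t
  simp only [Finset.mem_insert, Finset.mem_filter]
  constructor
  · intro ht
    rcases lt_or_eq_of_le (le_mvert G ht) with h | h
    · exact Or.inr ⟨ht, h⟩
    · exact Or.inl h
  · rintro (rfl | ⟨ht, _⟩)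
    · exact mvert_mem G u
    · exact ht

lemma sum_closedNbr (G : SimpleGraph (Fin n)) [DecidableRel G.Adj] (u : Fin n)
    (f : Fin n → ℕ) :
    ∑ t ∈ closedNbr G u, f t
      = f (mvert G u) + ∑ t ∈ (closedNbr G u).filter (fun t => t < mvert G u), f t := by
  conv_lhs => rw [closedNbr_split G u]
  rw [Finset.sum_insert (by simp)]

lemma greedy_dominates (G : SimpleGraph (Fin n)) [DecidableRel G.Adj] (w : Fin n → ℕ) :
    WDominates G w (greedy G w) Set.univ := by
  intro u _
  rw [sum_closedNbr]
  have h1 : w u - ∑ t ∈ (closedNbr G u).filter (fun t => t < mvert G u), greedy G w t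
      ≤ greedy G w (mvert G u) := by
    rw [greedy_eq]
    exact Finset.le_sup
      (f := fun v => w v - ∑ t ∈ (closedNbr G v).filter (fun t => t < mvert G u), greedy G w t)
      (Finset.mem_filter.mpr ⟨Finset.mem_univ u, rfl⟩)
  omega

lemma greedy_pos_spec (G : SimpleGraph (Fin n)) [DecidableRel G.Adj] (w : Fin n → ℕ)
    {k : Fin n} (hk : 0 < greedy G w k) :
    ∃ u, mvert G u = k ∧ ∑ t ∈ closedNbr G u, greedy G w t = w u := by
  have hne : (Finset.univ.filter (fun v => mvert G v = k)).Nonempty := by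
    by_contra hc
    rw [Finset.not_nonempty_iff_eq_empty] at hc
    rw [greedy_eq, hc, Finset.sup_empty] at hk
    exact absurd hk (by simp)
  obtain ⟨u, hu, hsup⟩ := Finset.exists_mem_eq_sup _ hne
    (fun v => w v - ∑ t ∈ (closedNbr G v).filter (fun t => t < k), greedy G w t)
  have hmu : mvert G u = k := (Finset.mem_filter.mp hu).2
  rw [← greedy_eq] at hsup
  refine ⟨u, hmu, ?_⟩
  rw [sum_closedNbr, hmu]
  have : 0 < w u - ∑ t ∈ (closedNbr G u).filter (fun t => t < k), greedy G w t := hsup ▸ hk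
  omega

end Greedy

section Geom

variable {n : ℕ} {x y : Fin n → ℝ} {G : SimpleGraph (Fin n)} [DecidableRel G.Adj]

lemma mem_closedNbr_iff (hxy : ∀ i, x i ≤ y i)
    (hadj : ∀ i j : Fin n, i ≠ j →
      (G.Adj i j ↔ (Set.Icc (x i) (y i) ∩ Set.Icc (x j) (y j)).Nonempty))
    {u t : Fin n} :
    t ∈ closedNbr G u ↔ (x t ≤ y u ∧ x u ≤ y t) := by
  constructor
  · intro ht
    rcases Finset.mem_insert.mp ht with rfl | hadj'
    · exact ⟨hxy t, hxy t⟩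
    · have hA : G.Adj u t := (SimpleGraph.mem_neighborFinset _ _ _).mp hadj'
      have hne : (Set.Icc (x u) (y u) ∩ Set.Icc (x t) (y t)).Nonempty :=
        (hadj u t hA.ne).mp hA
      rw [Set.Icc_inter_Icc, Set.nonempty_Icc, le_inf_iff, sup_le_iff, sup_le_iff] at hne
      exact ⟨hne.1.2, hne.2.1⟩
  · rintro ⟨h1, h2⟩
    by_cases htu : t = u
    · exact htu ▸ self_mem_closedNbr_s8 G t
    · have hA : G.Adj u t := by
        rw [hadj u t (Ne.symm htu), Set.Icc_inter_Icc, Set.nonempty_Icc]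
        exact sup_le (le_inf (hxy u) h2) (le_inf h1 (hxy t))
      exact Finset.mem_insert.mpr (Or.inr ((SimpleGraph.mem_neighborFinset _ _ _).mpr hA))

lemma greedy_zero (hxy : ∀ i, x i ≤ y i) (hy : Monotone y)
    (hadj : ∀ i j : Fin n, i ≠ j →
      (G.Adj i j ↔ (Set.Icc (x i) (y i) ∩ Set.Icc (x j) (y j)).Nonempty))
    (w : Fin n → ℕ) {u i : Fin n} (hik : i ≤ mvert G u)
    (hni : i ∉ closedNbr G u) (hcase : y u < x i) : greedy G w i = 0 := by
  by_contra hc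
  obtain ⟨v, hv, -⟩ := greedy_pos_spec G w (Nat.pos_of_ne_zero hc)
  have hiv : i ∈ closedNbr G v := hv ▸ mvert_mem G v
  have h1 : x i ≤ y v := ((mem_closedNbr_iff hxy hadj).mp hiv).1
  have h2 : x (mvert G u) ≤ y u := ((mem_closedNbr_iff hxy hadj).mp (mvert_mem G u)).1
  have hvi : v ≤ i := hv ▸ self_le_mvert G v
  have hk : mvert G u ∈ closedNbr G v := by
    rw [mem_closedNbr_iff hxy hadj]
    constructor
    · linarith
    · exact le_trans (hxy v) (le_trans (hy hvi) (hy hik))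
  have : mvert G u ≤ i := hv ▸ le_mvert G hk
  have hieq : i = mvert G u := le_antisymm hik this
  exact hni (hieq ▸ mvert_mem G u)

end Geom

lemma lowerset_eq_prefix {n : ℕ} (s : Finset (Fin n))
    (hs : ∀ i ∈ s, ∀ j, j ≤ i → j ∈ s) :
    s = Finset.univ.filter (fun i : Fin n => (i : ℕ) < s.card) := by
  ext i
  simp only [Finset.mem_filter, Finset.mem_univ, true_and]
  constructor
  · intro hi
    have h1 : Finset.Iic i ⊆ s := fun j hj => hs i hi j (Finset.mem_Iic.mp hj)
    have h2 := Finset.card_le_card h1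
    rw [Fin.card_Iic] at h2
    omega
  · intro hi
    by_contra hni
    have h2 : s ⊆ Finset.Iio i := fun j hj =>
      Finset.mem_Iio.mpr (lt_of_not_ge fun hle => hni (hs j hj i hle))
    have h3 := Finset.card_le_card h2
    rw [Fin.card_Iio] at h3
    have : (i : ℕ) ≤ i := le_rfl
    omega

/-- For intervals `[x i, y i]` enumerated with nondecreasing right endpoints and the
associated interval graph `G`, there is a `w`-dominating function `f` such that for
every `w`-dominating `h` and every `k`, the sum of `f` over the first `k` intervals
is at most the corresponding sum of `h`. -/
theorem exists_pointwise_minimal_dominating (n : ℕ) (x y : Fin n → ℝ)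
    (hxy : ∀ i, x i ≤ y i) (hy : Monotone y)
    (G : SimpleGraph (Fin n)) [DecidableRel G.Adj]
    (hadj : ∀ i j : Fin n, i ≠ j →
      (G.Adj i j ↔ (Set.Icc (x i) (y i) ∩ Set.Icc (x j) (y j)).Nonempty))
    (w : Fin n → ℕ) :
    ∃ f : Fin n → ℕ, WDominates G w f Set.univ ∧
      ∀ h : Fin n → ℕ, WDominates G w h Set.univ →
        ∀ k : ℕ,
          ∑ i ∈ Finset.univ.filter (fun i : Fin n => (i : ℕ) < k), f i ≤
          ∑ i ∈ Finset.univ.filter (fun i : Fin n => (i : ℕ) < k), h i := by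
  refine ⟨greedy G w, greedy_dominates G w, ?_⟩
  intro h hh k
  induction k using Nat.strong_induction_on with
  | _ k IH =>
  match k with
  | 0 => simp
  | Nat.succ k =>
    by_cases hkn : k < n
    · set i0 : Fin n := ⟨k, hkn⟩ with hi0def
      set P : Finset (Fin n) := Finset.univ.filter (fun i : Fin n => (i : ℕ) < k + 1) with hP
      by_cases hg : greedy G w i0 = 0
      · have hsplit : P = insert i0 (Finset.univ.filter (fun i : Fin n => (i : ℕ) < k)) := by
          ext i
          simp only [hP, Finset.mem_filter, Finset.mem_univ, true_and, Finset.mem_insert,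
            Fin.ext_iff, hi0def]
          omega
        have hnotmem : i0 ∉ Finset.univ.filter (fun i : Fin n => (i : ℕ) < k) := by
          simp [hi0def]
        rw [hsplit, Finset.sum_insert hnotmem, Finset.sum_insert hnotmem, hg]
        have := IH k (Nat.lt_succ_self k)
        omega
      · obtain ⟨u, hu, hNu⟩ := greedy_pos_spec G w (Nat.pos_of_ne_zero hg)
        set N : Finset (Fin n) := closedNbr G u with hNdef
        have hNP : N ⊆ P := by
          intro t ht
          have h1 : t ≤ mvert G u := le_mvert G ht
          rw [hu] at h1
          simp only [hP, Finset.mem_filter, Finset.mem_univ, true_and]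
          exact Nat.lt_succ_of_le h1
        set Ca : Finset (Fin n) := P.filter (fun i => y i < x u) with hCa
        have hCa_sub : Ca ⊆ P \ N := by
          intro i hi
          obtain ⟨hiP, hiy⟩ := Finset.mem_filter.mp hi
          refine Finset.mem_sdiff.mpr ⟨hiP, fun hmem => ?_⟩
          have := ((mem_closedNbr_iff hxy hadj).mp hmem).2
          linarith
        have hzero : ∀ i ∈ P \ N, i ∉ Ca → greedy G w i = 0 := by
          intro i hi hni
          obtain ⟨hiP, hiN⟩ := Finset.mem_sdiff.mp hi
          have h2 : ¬ y i < x u := fun hc => hni (Finset.mem_filter.mpr ⟨hiP, hc⟩)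
          have hik : i ≤ mvert G u := by
            rw [hu]
            have : (i : ℕ) < k + 1 := by
              simpa only [hP, Finset.mem_filter, Finset.mem_univ, true_and] using hiP
            exact Fin.le_def.mpr (by simp [hi0def]; omega)
          have hcase : y u < x i := by
            have h1 : ¬ (x i ≤ y u ∧ x u ≤ y i) := fun hc =>
              hiN ((mem_closedNbr_iff hxy hadj).mpr hc)
            push_neg at h1 h2
            by_contra hc
            push_neg at hc
            exact absurd (h1 hc) (not_lt.mpr h2)
          exact greedy_zero hxy hy hadj w hik hiN hcase
        have hCaf : ∑ i ∈ P \ N, greedy G w i = ∑ i ∈ Ca, greedy G w i :=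
          (Finset.sum_subset hCa_sub hzero).symm
        have hlower : Ca = Finset.univ.filter (fun i : Fin n => (i : ℕ) < Ca.card) := by
          apply lowerset_eq_prefix
          intro i hi j hji
          obtain ⟨hiP, hiy⟩ := Finset.mem_filter.mp hi
          have hiPk : (i : ℕ) < k + 1 := by
            simpa only [hP, Finset.mem_filter, Finset.mem_univ, true_and] using hiP
          refine Finset.mem_filter.mpr ⟨Finset.mem_filter.mpr ⟨Finset.mem_univ j, ?_⟩, ?_⟩
          · have := Fin.le_def.mp hji; omega
          · exact lt_of_le_of_lt (hy hji) hiy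
        have hcard : Ca.card < k + 1 := by
          have hsub : Ca ⊆ Finset.Iio u := by
            intro i hi
            obtain ⟨-, hiy⟩ := Finset.mem_filter.mp hi
            refine Finset.mem_Iio.mpr (lt_of_not_ge fun hle => ?_)
            have := hy hle
            linarith [hxy u]
          have h3 := Finset.card_le_card hsub
          rw [Fin.card_Iio] at h3
          have h4 : u ≤ i0 := hu ▸ self_le_mvert G u
          have := Fin.le_def.mp h4
          simp only [hi0def] at this
          omega
        have hIH : ∑ i ∈ Ca, greedy G w i ≤ ∑ i ∈ Ca, h i := by
          rw [hlower]
          exact IH _ hcard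
        have hCah : ∑ i ∈ Ca, h i ≤ ∑ i ∈ P \ N, h i :=
          Finset.sum_le_sum_of_subset hCa_sub
        have hPf : ∑ i ∈ P, greedy G w i
            = ∑ i ∈ P \ N, greedy G w i + ∑ i ∈ N, greedy G w i :=
          (Finset.sum_sdiff hNP).symm
        have hPh : ∑ i ∈ P, h i = ∑ i ∈ P \ N, h i + ∑ i ∈ N, h i :=
          (Finset.sum_sdiff hNP).symm
        have hwh : w u ≤ ∑ i ∈ N, h i := hh u trivial
        calc ∑ i ∈ P, greedy G w i
            = ∑ i ∈ P \ N, greedy G w i + ∑ i ∈ N, greedy G w i := hPf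
          _ = ∑ i ∈ Ca, greedy G w i + w u := by rw [hCaf, hNu]
          _ ≤ ∑ i ∈ Ca, h i + ∑ i ∈ N, h i := Nat.add_le_add hIH hwh
          _ ≤ ∑ i ∈ P \ N, h i + ∑ i ∈ N, h i := Nat.add_le_add_right hCah _
          _ = ∑ i ∈ P, h i := hPh.symm
    · have heq : (Finset.univ.filter (fun i : Fin n => (i : ℕ) < k + 1))
          = Finset.univ.filter (fun i : Fin n => (i : ℕ) < k) := by
        ext i
        simp only [Finset.mem_filter, Finset.mem_univ, true_and]
        have := i.isLt
        omega
      rw [heq]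
      exact IH k (Nat.lt_succ_self k)
end
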